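/- arXiv:0806.4915 — 4 statements merged into one kernel-verified Lean document; each statement's English description precedes it below -/
import Mathlib

section
/- Let n ≥ 1 be an integer and q ≥ 1 a real number with n q < 4. There exists a constant C > 0 such that for all t > 0: ( ∫₀ᵗ ( (1 + t − s)^{−1} (t − s)^{−n/4} (1 + s)^{−1 − n/4} )^q ds )^{1/q} ≤ C (1 + t)^{−1 − n/4}. -/
open intervalIntegral MeasureTheory Real Set

lemma aux_rpow_anti {x y r : ℝ} (hx : 0 < x) (hxy : x ≤ y) (hr : 0 ≤ r) :
    y ^ (-r) ≤ x ^ (-r) := by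
  rw [Real.rpow_neg hx.le, Real.rpow_neg (hx.trans_le hxy).le]
  exact inv_anti₀ (Real.rpow_pos_of_pos hx r) (Real.rpow_le_rpow hx.le hxy hr)

lemma aux_int_kernel {q b T : ℝ} (hb : b < 1) (hT : 0 ≤ T) {A B : ℝ}
    (hA : A ∈ Icc 0 T) (hB : B ∈ Icc 0 T) :
    IntervalIntegrable (fun u : ℝ => (1 + u) ^ (-q) * u ^ (-b)) volume A B := by
  apply IntervalIntegrable.continuousOn_mul
  · exact intervalIntegrable_rpow' (by linarith)
  · apply ContinuousOn.rpow_const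
    · exact (continuous_const.add continuous_id).continuousOn
    · intro x hx
      left
      have h1 : (0:ℝ) ≤ x := by
        rcases le_total A B with h | h
        · rw [uIcc_of_le h] at hx; exact le_trans hA.1 hx.1
        · rw [uIcc_of_ge h] at hx; exact le_trans hB.1 hx.1
      positivity

example : True := trivial

lemma aux_kernel_bound {q b T : ℝ} (hq : 1 ≤ q) (hb0 : 0 < b) (hb : b < 1) (hT : 0 ≤ T) :
    (∫ u in (0:ℝ)..T, (1 + u) ^ (-q) * u ^ (-b)) ≤ 1 / (1 - b) + 1 / (q + b - 1) := by
  have hqb : 0 < q + b - 1 := by linarith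
  have h1b : 0 < 1 - b := by linarith
  have hsub : ∀ {A B : ℝ}, 0 ≤ A → A ≤ B → B ≤ max T 1 →
      (∫ u in A..B, (1 + u) ^ (-q) * u ^ (-b)) ≤ ∫ u in A..B, u ^ (-b) := by
    intro A B hA hAB hB
    apply integral_mono_on hAB
    · exact aux_int_kernel hb (le_trans zero_le_one (le_max_right T 1)) ⟨hA, le_trans hAB hB⟩ ⟨le_trans hA hAB, hB⟩
    · exact intervalIntegrable_rpow' (by linarith)
    · intro x hx
      have hx0 : 0 ≤ x := le_trans hA hx.1
      have h1 : (1 + x) ^ (-q) ≤ 1 :=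
        Real.rpow_le_one_of_one_le_of_nonpos (by linarith) (by linarith)
      calc (1 + x) ^ (-q) * x ^ (-b) ≤ 1 * x ^ (-b) := by
            apply mul_le_mul_of_nonneg_right h1 (Real.rpow_nonneg hx0 _)
        _ = x ^ (-b) := one_mul _
  have hfirst : ∀ {B : ℝ}, 0 ≤ B → B ≤ 1 →
      (∫ u in (0:ℝ)..B, (1 + u) ^ (-q) * u ^ (-b)) ≤ 1 / (1 - b) := by
    intro B hB hB1
    calc (∫ u in (0:ℝ)..B, (1 + u) ^ (-q) * u ^ (-b)) ≤ ∫ u in (0:ℝ)..B, u ^ (-b) :=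
          hsub le_rfl hB (hB1.trans (le_max_right T 1))
      _ = (B ^ (-b + 1) - (0:ℝ) ^ (-b + 1)) / (-b + 1) :=
          integral_rpow (Or.inl (by linarith))
      _ ≤ 1 / (1 - b) := by
          rw [Real.zero_rpow (by linarith : -b + 1 ≠ 0)]
          have : B ^ (-b + 1) ≤ 1 := Real.rpow_le_one hB hB1 (by linarith)
          rw [show -b + 1 = 1 - b by ring] at this ⊢
          gcongr
          linarith
  rcases le_or_gt T 1 with hT1 | hT1
  · have := hfirst hT hT1
    have h2 : 0 ≤ 1 / (q + b - 1) := by positivity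
    linarith
  · have hI1 : IntervalIntegrable (fun u : ℝ => (1 + u) ^ (-q) * u ^ (-b)) volume 0 1 :=
      aux_int_kernel hb (le_trans zero_le_one (le_max_right T 1))
        ⟨le_rfl, le_trans zero_le_one (le_max_right T 1)⟩
        ⟨zero_le_one, le_max_right T 1⟩
    have hI2 : IntervalIntegrable (fun u : ℝ => (1 + u) ^ (-q) * u ^ (-b)) volume 1 T :=
      aux_int_kernel hb (le_trans zero_le_one (le_max_right T 1))
        ⟨zero_le_one, le_max_right T 1⟩ ⟨hT, le_max_left T 1⟩
    rw [← integral_add_adjacent_intervals hI1 hI2]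
    have hzero : (0:ℝ) ∉ Set.uIcc (1:ℝ) T := by
      rw [Set.uIcc_of_le hT1.le]
      intro h; exact absurd h.1 (by norm_num)
    have hsecond : (∫ u in (1:ℝ)..T, (1 + u) ^ (-q) * u ^ (-b)) ≤ 1 / (q + b - 1) := by
      have hmono : (∫ u in (1:ℝ)..T, (1 + u) ^ (-q) * u ^ (-b))
          ≤ ∫ u in (1:ℝ)..T, u ^ (-(q + b)) := by
        apply integral_mono_on hT1.le hI2 (intervalIntegrable_rpow (Or.inr hzero))
        intro x hx
        have hx1 : (1:ℝ) ≤ x := hx.1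
        have hx0 : (0:ℝ) < x := by linarith
        have h1 : (1 + x) ^ (-q) ≤ x ^ (-q) :=
          aux_rpow_anti hx0 (by linarith) (by linarith)
        calc (1 + x) ^ (-q) * x ^ (-b) ≤ x ^ (-q) * x ^ (-b) :=
              mul_le_mul_of_nonneg_right h1 (Real.rpow_nonneg hx0.le _)
          _ = x ^ (-(q + b)) := by
              rw [show -(q + b) = -q + -b by ring, Real.rpow_add hx0]
      have heval : (∫ u in (1:ℝ)..T, u ^ (-(q + b)))
          = (T ^ (-(q + b) + 1) - (1:ℝ) ^ (-(q + b) + 1)) / (-(q + b) + 1) :=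
        integral_rpow (Or.inr ⟨by intro h; rw [neg_eq_iff_eq_neg] at h; linarith, hzero⟩)
      rw [heval] at hmono
      refine hmono.trans ?_
      rw [Real.one_rpow]
      have hTpow : 0 ≤ T ^ (-(q + b) + 1) := Real.rpow_nonneg (by linarith) _
      have heq : (T ^ (-(q + b) + 1) - 1) / (-(q + b) + 1)
          = (1 - T ^ (-(q + b) + 1)) / (q + b - 1) := by
        rw [div_eq_div_iff (by linarith) hqb.ne']
        ring
      rw [heq]
      gcongr
      linarith
    have := hfirst zero_le_one le_rfl
    linarith

lemma aux_one_add_bound {p T : ℝ} (hp : 1 < p) (hT : 0 ≤ T) :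
    (∫ s in (0:ℝ)..T, (1 + s) ^ (-p)) ≤ 1 / (p - 1) := by
  have h1 : (∫ s in (0:ℝ)..T, (1 + s) ^ (-p)) = ∫ u in (1:ℝ)..(1 + T), u ^ (-p) := by
    rw [intervalIntegral.integral_comp_add_left (fun u => u ^ (-p)) 1, add_zero]
  have hzero : (0:ℝ) ∉ Set.uIcc (1:ℝ) (1 + T) := by
    rw [Set.uIcc_of_le (by linarith)]
    intro h; exact absurd h.1 (by norm_num)
  rw [h1, integral_rpow (Or.inr ⟨by intro h; rw [neg_eq_iff_eq_neg] at h; linarith, hzero⟩),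
    Real.one_rpow]
  have hTpow : 0 ≤ (1 + T) ^ (-p + 1) := Real.rpow_nonneg (by linarith) _
  have heq : ((1 + T) ^ (-p + 1) - 1) / (-p + 1) = (1 - (1 + T) ^ (-p + 1)) / (p - 1) := by
    rw [div_eq_div_iff (by linarith : -p + 1 ≠ 0) (by linarith : p - 1 ≠ 0)]
    ring
  rw [heq]
  gcongr
  · linarith

lemma aux_scale {x y c r : ℝ} (hy : 0 < y) (hc : 0 < c) (h : y ≤ c * x) (hr : 0 ≤ r) :
    x ^ (-r) ≤ c ^ r * y ^ (-r) := by
  have hx : 0 < x := by nlinarith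
  have h1 : y / c ≤ x := (div_le_iff₀ hc).2 (by linarith [mul_comm c x])
  calc x ^ (-r) ≤ (y / c) ^ (-r) := aux_rpow_anti (div_pos hy hc) h1 hr
    _ = c ^ r * y ^ (-r) := by
        rw [Real.div_rpow hy.le hc.le, div_eq_mul_inv, Real.rpow_neg hc.le, inv_inv, mul_comm]

lemma aux_pointwise {a q t s : ℝ} (ha : 0 < a) (hq : 1 ≤ q) (ht : 1 ≤ t)
    (hs0 : 0 ≤ s) (hst : s ≤ t) :
    ((1 + t - s)⁻¹ * (t - s) ^ (-a) * (1 + s) ^ (-1 - a)) ^ q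
      ≤ 6 ^ ((1 + a) * q) * (1 + t) ^ (-((1 + a) * q)) *
        ((1 + s) ^ (-((1 + a) * q)) + (1 + t - s) ^ (-q) * (t - s) ^ (-(a * q))) := by
  have hts0 : 0 ≤ t - s := by linarith
  have h1ts : (0:ℝ) < 1 + t - s := by linarith
  have h1s : (0:ℝ) < 1 + s := by linarith
  have h1t : (0:ℝ) < 1 + t := by linarith
  have hq0 : (0:ℝ) ≤ q := by linarith
  have hP0 : (0:ℝ) ≤ (1 + a) * q := by positivity
  set A := (1 + t - s) ^ (-q) with hA
  set B := (t - s) ^ (-(a * q)) with hB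
  set C := (1 + s) ^ (-((1 + a) * q)) with hC
  have hA0 : 0 ≤ A := Real.rpow_nonneg h1ts.le _
  have hB0 : 0 ≤ B := Real.rpow_nonneg hts0 _
  have hC0 : 0 ≤ C := Real.rpow_nonneg h1s.le _
  -- expansion of the LHS
  have hexp : ((1 + t - s)⁻¹ * (t - s) ^ (-a) * (1 + s) ^ (-1 - a)) ^ q = A * B * C := by
    rw [Real.mul_rpow (mul_nonneg (inv_nonneg.2 h1ts.le) (Real.rpow_nonneg hts0 _))
        (Real.rpow_nonneg h1s.le _),
      Real.mul_rpow (inv_nonneg.2 h1ts.le) (Real.rpow_nonneg hts0 _),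
      Real.inv_rpow h1ts.le, ← Real.rpow_neg h1ts.le,
      ← Real.rpow_mul hts0, ← Real.rpow_mul h1s.le, hA, hB, hC]
    ring_nf
  rw [hexp]
  -- key comparison constant
  have hmain : 0 ≤ (6:ℝ) ^ ((1 + a) * q) * (1 + t) ^ (-((1 + a) * q)) :=
    mul_nonneg (Real.rpow_nonneg (by norm_num) _) (Real.rpow_nonneg h1t.le _)
  have h6 : (6:ℝ) ^ ((1 + a) * q) = 2 ^ ((1 + a) * q) * 3 ^ ((1 + a) * q) := by
    rw [← Real.mul_rpow (by norm_num) (by norm_num)]; norm_num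
  rcases le_total (2 * s) t with hcase | hcase
  · -- s ≤ t/2 : bound A * B by the prefactor
    have hAB : A * B ≤ 6 ^ ((1 + a) * q) * (1 + t) ^ (-((1 + a) * q)) := by
      have h3 : B ≤ 3 ^ (a * q) * (1 + t - s) ^ (-(a * q)) :=
        aux_scale h1ts (by norm_num) (by linarith) (by positivity)
      have hAA : A * (1 + t - s) ^ (-(a * q)) = (1 + t - s) ^ (-((1 + a) * q)) := by
        rw [hA, ← Real.rpow_add h1ts]; ring_nf
      have h2 : (1 + t - s) ^ (-((1 + a) * q)) ≤ 2 ^ ((1 + a) * q) * (1 + t) ^ (-((1 + a) * q)) :=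
        aux_scale h1t (by norm_num) (by linarith) hP0
      calc A * B ≤ A * (3 ^ (a * q) * (1 + t - s) ^ (-(a * q))) :=
            mul_le_mul_of_nonneg_left h3 hA0
        _ = 3 ^ (a * q) * (A * (1 + t - s) ^ (-(a * q))) := by ring
        _ = 3 ^ (a * q) * (1 + t - s) ^ (-((1 + a) * q)) := by rw [hAA]
        _ ≤ 3 ^ (a * q) * (2 ^ ((1 + a) * q) * (1 + t) ^ (-((1 + a) * q))) := by
            apply mul_le_mul_of_nonneg_left h2 (Real.rpow_nonneg (by norm_num) _)
        _ ≤ 3 ^ ((1 + a) * q) * (2 ^ ((1 + a) * q) * (1 + t) ^ (-((1 + a) * q))) := by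
            apply mul_le_mul_of_nonneg_right
              (Real.rpow_le_rpow_of_exponent_le (by norm_num) (by nlinarith))
              (mul_nonneg (Real.rpow_nonneg (by norm_num) _) (Real.rpow_nonneg h1t.le _))
        _ = 6 ^ ((1 + a) * q) * (1 + t) ^ (-((1 + a) * q)) := by rw [h6]; ring
    calc A * B * C ≤ 6 ^ ((1 + a) * q) * (1 + t) ^ (-((1 + a) * q)) * C :=
          mul_le_mul_of_nonneg_right hAB hC0
      _ ≤ _ := by nlinarith [mul_nonneg (mul_nonneg hmain hA0) hB0]
  · -- s ≥ t/2 : bound C by the prefactor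
    have hCb : C ≤ 6 ^ ((1 + a) * q) * (1 + t) ^ (-((1 + a) * q)) := by
      have h2 : C ≤ 2 ^ ((1 + a) * q) * (1 + t) ^ (-((1 + a) * q)) :=
        aux_scale h1t (by norm_num) (by linarith) hP0
      refine h2.trans ?_
      apply mul_le_mul_of_nonneg_right
        (Real.rpow_le_rpow (by norm_num) (by norm_num) hP0) (Real.rpow_nonneg h1t.le _)
    calc A * B * C ≤ A * B * (6 ^ ((1 + a) * q) * (1 + t) ^ (-((1 + a) * q))) :=
          mul_le_mul_of_nonneg_left hCb (mul_nonneg hA0 hB0)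
      _ ≤ _ := by nlinarith [mul_nonneg hmain hC0]

/-- Convolution-in-time estimate: for `n q < 4`,
`(∫₀ᵗ ((1+t−s)⁻¹ (t−s)^{−n/4} (1+s)^{−1−n/4})^q ds)^{1/q} ≤ C (1+t)^{−1−n/4}`. -/
theorem stmt6 (n : ℕ) (hn : 1 ≤ n) (q : ℝ) (hq : 1 ≤ q) (hnq : (n : ℝ) * q < 4) :
    ∃ C : ℝ, 0 < C ∧ ∀ t : ℝ, 0 < t →
      (∫ s in (0 : ℝ)..t,
          ((1 + t - s)⁻¹ * (t - s) ^ (-(n : ℝ) / 4) * (1 + s) ^ (-1 - (n : ℝ) / 4)) ^ q)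
        ^ (1 / q)
      ≤ C * (1 + t) ^ (-1 - (n : ℝ) / 4) := by
  have hq0 : (0:ℝ) < q := by linarith
  set a : ℝ := (n : ℝ) / 4 with ha_def
  have ha0 : 0 < a := by
    have : (1:ℝ) ≤ (n:ℝ) := by exact_mod_cast hn
    rw [ha_def]; linarith
  set b : ℝ := a * q with hb_def
  have hb0 : 0 < b := by rw [hb_def]; positivity
  have hb1 : b < 1 := by
    rw [hb_def, ha_def]
    have : (n:ℝ) * q < 4 := hnq
    linarith [this]
  set P : ℝ := (1 + a) * q with hP_def
  have hP1 : 1 < P := by nlinarith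
  set M : ℝ := 1 / (1 - b) + 1 / (q + b - 1) with hM_def
  have hM0 : 0 < M := by
    rw [hM_def]
    have h1 : 0 < 1 / (1 - b) := div_pos one_pos (by linarith)
    have h2 : 0 < 1 / (q + b - 1) := by
      apply div_pos one_pos; linarith
    linarith
  set X : ℝ := 6 ^ P * (1 / (P - 1) + M) with hX_def
  have hX0 : 0 < X := by
    rw [hX_def]
    apply mul_pos (Real.rpow_pos_of_pos (by norm_num) _)
    have : 0 < 1 / (P - 1) := by apply div_pos one_pos; linarith
    exact add_pos this hM0
  set C₁ : ℝ := X ^ (1/q) with hC₁_def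
  have hC₁0 : 0 < C₁ := Real.rpow_pos_of_pos hX0 _
  set C₂ : ℝ := (1 / (1 - b)) ^ (1/q) * 2 ^ (1 + a) with hC₂_def
  have hC₂0 : 0 < C₂ := by
    have h1b : (0:ℝ) < 1 - b := by linarith
    exact mul_pos (Real.rpow_pos_of_pos (by positivity) _) (Real.rpow_pos_of_pos two_pos _)
  refine ⟨max C₁ C₂, lt_of_lt_of_le hC₁0 (le_max_left _ _), ?_⟩
  intro t ht
  have h1t : (0:ℝ) < 1 + t := by linarith
  have hexp_neg : -(n:ℝ)/4 = -a := by rw [ha_def, neg_div]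
  rw [hexp_neg]
  -- nonnegativity of the integrand and integral
  have hf_nonneg : ∀ s ∈ Set.Icc (0:ℝ) t,
      0 ≤ ((1 + t - s)⁻¹ * (t - s) ^ (-a) * (1 + s) ^ (-1 - a)) ^ q := by
    intro s hs
    apply Real.rpow_nonneg
    apply mul_nonneg (mul_nonneg (inv_nonneg.2 (by linarith [hs.2])) _) _
    · exact Real.rpow_nonneg (by linarith [hs.2]) _
    · exact Real.rpow_nonneg (by linarith [hs.1]) _
  have hI_nonneg : 0 ≤ ∫ s in (0:ℝ)..t,
      ((1 + t - s)⁻¹ * (t - s) ^ (-a) * (1 + s) ^ (-1 - a)) ^ q :=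
    intervalIntegral.integral_nonneg ht.le hf_nonneg
  -- kernel integrand integrability (on 0..t, as a function of s)
  have hker_eq : (fun s : ℝ => (1 + t - s) ^ (-q) * (t - s) ^ (-b))
      = fun s : ℝ => (1 + (t - s)) ^ (-q) * (t - s) ^ (-b) := by
    funext s; rw [add_sub_assoc]
  have hker_int : IntervalIntegrable
      (fun s : ℝ => (1 + t - s) ^ (-q) * (t - s) ^ (-b)) volume 0 t := by
    rw [hker_eq]
    have := (aux_int_kernel (q := q) (b := b) (T := t) hb1 ht.le
      ⟨le_rfl, ht.le⟩ ⟨ht.le, le_rfl⟩ : IntervalIntegrable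
        (fun u : ℝ => (1 + u) ^ (-q) * u ^ (-b)) volume 0 t)
    simpa using (this.comp_sub_left t).symm
  have hker_val : (∫ s in (0:ℝ)..t, (1 + t - s) ^ (-q) * (t - s) ^ (-b)) ≤ M := by
    rw [hker_eq]
    have hsub : (∫ s in (0:ℝ)..t, (1 + (t - s)) ^ (-q) * (t - s) ^ (-b))
        = ∫ u in (0:ℝ)..t, (1 + u) ^ (-q) * u ^ (-b) := by
      rw [intervalIntegral.integral_comp_sub_left
        (fun u : ℝ => (1 + u) ^ (-q) * u ^ (-b)) t]
      norm_num
    rw [hsub, hM_def]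
    exact aux_kernel_bound hq hb0 hb1 ht.le
  rcases le_total 1 t with ht1 | ht1
  · -- large time
    have hg_int : IntervalIntegrable (fun s : ℝ =>
        6 ^ P * (1 + t) ^ (-P) * ((1 + s) ^ (-P) + (1 + t - s) ^ (-q) * (t - s) ^ (-b)))
        volume 0 t := by
      apply IntervalIntegrable.const_mul
      apply IntervalIntegrable.add _ hker_int
      apply ContinuousOn.intervalIntegrable
      apply ContinuousOn.rpow_const
      · exact (continuous_const.add continuous_id).continuousOn
      · intro x hx
        left
        rw [Set.uIcc_of_le ht.le] at hx
        have hx0 : (0:ℝ) ≤ x := hx.1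
        positivity
    have hone_int : IntervalIntegrable (fun s : ℝ => (1 + s) ^ (-P)) volume 0 t := by
      apply ContinuousOn.intervalIntegrable
      apply ContinuousOn.rpow_const
      · exact (continuous_const.add continuous_id).continuousOn
      · intro x hx
        left
        rw [Set.uIcc_of_le ht.le] at hx
        have hx0 : (0:ℝ) ≤ x := hx.1
        positivity
    have hIbound : (∫ s in (0:ℝ)..t,
        ((1 + t - s)⁻¹ * (t - s) ^ (-a) * (1 + s) ^ (-1 - a)) ^ q)
        ≤ X * (1 + t) ^ (-P) := by
      by_cases hInt : IntervalIntegrable (fun s : ℝ =>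
          ((1 + t - s)⁻¹ * (t - s) ^ (-a) * (1 + s) ^ (-1 - a)) ^ q) volume 0 t
      · calc (∫ s in (0:ℝ)..t, ((1 + t - s)⁻¹ * (t - s) ^ (-a) * (1 + s) ^ (-1 - a)) ^ q)
            ≤ ∫ s in (0:ℝ)..t,
              6 ^ P * (1 + t) ^ (-P) * ((1 + s) ^ (-P) + (1 + t - s) ^ (-q) * (t - s) ^ (-b)) := by
              apply intervalIntegral.integral_mono_on ht.le hInt hg_int
              intro s hs
              exact aux_pointwise ha0 hq ht1 hs.1 hs.2
          _ = 6 ^ P * (1 + t) ^ (-P) * ((∫ s in (0:ℝ)..t, (1 + s) ^ (-P))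
              + ∫ s in (0:ℝ)..t, (1 + t - s) ^ (-q) * (t - s) ^ (-b)) := by
              rw [intervalIntegral.integral_const_mul,
                intervalIntegral.integral_add hone_int hker_int]
          _ ≤ 6 ^ P * (1 + t) ^ (-P) * (1 / (P - 1) + M) := by
              have hpre : (0:ℝ) ≤ 6 ^ P * (1 + t) ^ (-P) :=
                mul_nonneg (Real.rpow_nonneg (by norm_num) _) (Real.rpow_nonneg h1t.le _)
              apply mul_le_mul_of_nonneg_left _ hpre
              exact add_le_add (aux_one_add_bound hP1 ht.le) hker_val
          _ = X * (1 + t) ^ (-P) := by rw [hX_def]; ring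
      · rw [intervalIntegral.integral_undef hInt]
        exact mul_nonneg hX0.le (Real.rpow_nonneg h1t.le _)
    have hstep : (∫ s in (0:ℝ)..t,
        ((1 + t - s)⁻¹ * (t - s) ^ (-a) * (1 + s) ^ (-1 - a)) ^ q) ^ (1/q)
        ≤ (X * (1 + t) ^ (-P)) ^ (1/q) :=
      Real.rpow_le_rpow hI_nonneg hIbound (by positivity)
    have hfinal : (X * (1 + t) ^ (-P)) ^ (1/q) = C₁ * (1 + t) ^ (-1 - a) := by
      have hqne : q ≠ 0 := ne_of_gt hq0
      have hPq : -P * (1/q) = -1 - a := by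
        rw [hP_def]
        field_simp
        ring
      rw [Real.mul_rpow hX0.le (Real.rpow_nonneg h1t.le _), hC₁_def,
        ← Real.rpow_mul h1t.le, hPq]
    refine le_trans hstep (le_trans (le_of_eq hfinal) ?_)
    exact mul_le_mul_of_nonneg_right (le_max_left C₁ C₂) (Real.rpow_nonneg h1t.le _)
  · -- small time
    have htb_int : IntervalIntegrable (fun s : ℝ => (t - s) ^ (-b)) volume 0 t := by
      have h0 : IntervalIntegrable (fun u : ℝ => u ^ (-b)) volume 0 t :=
        intervalIntegrable_rpow' (by linarith)
      simpa using (h0.comp_sub_left t).symm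
    have hIbound : (∫ s in (0:ℝ)..t,
        ((1 + t - s)⁻¹ * (t - s) ^ (-a) * (1 + s) ^ (-1 - a)) ^ q) ≤ 1 / (1 - b) := by
      by_cases hInt : IntervalIntegrable (fun s : ℝ =>
          ((1 + t - s)⁻¹ * (t - s) ^ (-a) * (1 + s) ^ (-1 - a)) ^ q) volume 0 t
      · calc (∫ s in (0:ℝ)..t, ((1 + t - s)⁻¹ * (t - s) ^ (-a) * (1 + s) ^ (-1 - a)) ^ q)
            ≤ ∫ s in (0:ℝ)..t, (t - s) ^ (-b) := by
              apply intervalIntegral.integral_mono_on ht.le hInt htb_int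
              intro s hs
              have hts0 : (0:ℝ) ≤ t - s := by linarith [hs.2]
              have hB0 : (0:ℝ) ≤ (t - s) ^ (-a) := Real.rpow_nonneg hts0 _
              have hfb : (1 + t - s)⁻¹ * (t - s) ^ (-a) * (1 + s) ^ (-1 - a)
                  ≤ (t - s) ^ (-a) := by
                have h1 : (1 + t - s)⁻¹ ≤ 1 := by
                  rw [inv_le_one_iff₀]; right; linarith [hs.2]
                have h2 : (1 + s) ^ (-1 - a) ≤ 1 :=
                  Real.rpow_le_one_of_one_le_of_nonpos (by linarith [hs.1]) (by linarith)
                have hA0 : (0:ℝ) ≤ (1 + t - s)⁻¹ := inv_nonneg.2 (by linarith [hs.2])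
                calc (1 + t - s)⁻¹ * (t - s) ^ (-a) * (1 + s) ^ (-1 - a)
                    ≤ (1 + t - s)⁻¹ * (t - s) ^ (-a) * 1 :=
                      mul_le_mul_of_nonneg_left h2 (mul_nonneg hA0 hB0)
                  _ = (1 + t - s)⁻¹ * (t - s) ^ (-a) := mul_one _
                  _ ≤ 1 * (t - s) ^ (-a) := mul_le_mul_of_nonneg_right h1 hB0
                  _ = (t - s) ^ (-a) := one_mul _
              have hf0 : (0:ℝ) ≤ (1 + t - s)⁻¹ * (t - s) ^ (-a) * (1 + s) ^ (-1 - a) :=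
                mul_nonneg (mul_nonneg (inv_nonneg.2 (by linarith [hs.2])) hB0)
                  (Real.rpow_nonneg (by linarith [hs.1]) _)
              calc ((1 + t - s)⁻¹ * (t - s) ^ (-a) * (1 + s) ^ (-1 - a)) ^ q
                  ≤ ((t - s) ^ (-a)) ^ q := Real.rpow_le_rpow hf0 hfb hq0.le
                _ = (t - s) ^ (-b) := by
                    rw [← Real.rpow_mul hts0, hb_def]
                    ring_nf
          _ = ∫ u in (0:ℝ)..t, u ^ (-b) := by
              rw [intervalIntegral.integral_comp_sub_left (fun u : ℝ => u ^ (-b)) t]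
              norm_num
          _ = (t ^ (-b + 1) - (0:ℝ) ^ (-b + 1)) / (-b + 1) :=
              integral_rpow (Or.inl (by linarith))
          _ ≤ 1 / (1 - b) := by
              rw [Real.zero_rpow (by linarith : -b + 1 ≠ 0)]
              have ht1' : t ^ (-b + 1) ≤ 1 := Real.rpow_le_one ht.le ht1 (by linarith)
              rw [show -b + 1 = 1 - b by ring] at ht1' ⊢
              gcongr
              · linarith
      · rw [intervalIntegral.integral_undef hInt]
        exact le_of_lt (div_pos one_pos (by linarith))
    have hstep : (∫ s in (0:ℝ)..t,
        ((1 + t - s)⁻¹ * (t - s) ^ (-a) * (1 + s) ^ (-1 - a)) ^ q) ^ (1/q)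
        ≤ (1 / (1 - b)) ^ (1/q) :=
      Real.rpow_le_rpow hI_nonneg hIbound (by positivity)
    have hpow : (2:ℝ) ^ (-1 - a) ≤ (1 + t) ^ (-1 - a) := by
      rw [show (-1 - a : ℝ) = -(1 + a) by ring]
      exact aux_rpow_anti h1t (by linarith) (by linarith)
    calc (∫ s in (0:ℝ)..t,
        ((1 + t - s)⁻¹ * (t - s) ^ (-a) * (1 + s) ^ (-1 - a)) ^ q) ^ (1/q)
        ≤ (1 / (1 - b)) ^ (1/q) := hstep
      _ = C₂ * 2 ^ (-1 - a) := by
          have h21 : (2:ℝ) ^ (1 + a) * 2 ^ (-1 - a) = 1 := by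
            rw [← Real.rpow_add two_pos, show (1 + a + (-1 - a) : ℝ) = 0 by ring,
              Real.rpow_zero]
          rw [hC₂_def, mul_assoc, h21, mul_one]
      _ ≤ C₂ * (1 + t) ^ (-1 - a) := mul_le_mul_of_nonneg_left hpow hC₂0.le
      _ ≤ max C₁ C₂ * (1 + t) ^ (-1 - a) :=
          mul_le_mul_of_nonneg_right (le_max_right _ _) (Real.rpow_nonneg h1t.le _)
end

section
/- For every integer n with 1 ≤ n ≤ 3 there exists a constant C > 0 such that (1 + t)^{n/2} ∫₀ᵗ (1 + t − s)^{−1} (t − s)^{−n/4} (1 + s)^{−3n/4} ds ≤ C for all t > 0. -/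
set_option maxHeartbeats 1000000

open Real MeasureTheory Set intervalIntegral

lemma keypt {a u : ℝ} (ha1 : 1/4 ≤ a) (ha2 : a ≤ 3/4) (hu : 0 ≤ u) :
    (1 + u)⁻¹ * u ^ (-a) ≤ u ^ (-(7/8) : ℝ) := by
  rcases hu.lt_or_eq with h0 | h0
  · rcases le_total u 1 with h1 | h1
    · calc (1 + u)⁻¹ * u ^ (-a) ≤ 1 * u ^ (-a) := by
            apply mul_le_mul_of_nonneg_right _ (rpow_nonneg h0.le _)
            rw [inv_le_one_iff₀]; right; linarith
          _ ≤ u ^ (-(7/8) : ℝ) := by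
            rw [one_mul]
            exact rpow_le_rpow_of_exponent_ge h0 h1 (by linarith)
    · calc (1 + u)⁻¹ * u ^ (-a) ≤ u⁻¹ * u ^ (-a) := by
            apply mul_le_mul_of_nonneg_right _ (rpow_nonneg h0.le _)
            apply inv_anti₀ h0; linarith
          _ = u ^ (-1 + -a : ℝ) := by
            rw [rpow_add h0, rpow_neg_one]
          _ ≤ u ^ (-(7/8) : ℝ) :=
            rpow_le_rpow_of_exponent_le h1 (by linarith)
  · rw [← h0, Real.zero_rpow (show -a ≠ 0 by intro h; rw [neg_eq_zero] at h; linarith), Real.zero_rpow (by norm_num)]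
    simp

lemma intg_sub {t c d r : ℝ} (hr : -1 < r) :
    IntervalIntegrable (fun s => (t - s) ^ r) volume c d := by
  simpa using (intervalIntegrable_rpow' hr (a := t - c) (b := t - d)).comp_sub_left t

lemma int_sub_eval {t c r : ℝ} (hr : -1 < r) (hc : c ≤ t) :
    ∫ s in c..t, (t - s) ^ r = (t - c) ^ (r + 1) / (r + 1) := by
  rw [integral_comp_sub_left (fun u => u ^ r) t, sub_self,
    integral_rpow (Or.inl hr), Real.zero_rpow (by linarith), sub_zero]

lemma int_add_eval {x r : ℝ} (hr : -1 < r) (hx : 0 ≤ x) :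
    ∫ s in (0:ℝ)..x, (1 + s) ^ r = ((1 + x) ^ (r + 1) - 1) / (r + 1) := by
  rw [integral_comp_add_left (fun u => u ^ r) 1, add_zero,
    integral_rpow (Or.inl hr), Real.one_rpow]


lemma fmeas (t a : ℝ) : Measurable (fun s : ℝ => (1 + t - s)⁻¹ * (t - s) ^ (-a) * (1 + s) ^ (-(3*a))) := by
  exact (((measurable_const.sub measurable_id).inv.mul
    ((measurable_const.sub measurable_id).pow measurable_const)).mul
    ((measurable_const.add measurable_id).pow measurable_const))

lemma key_small (a : ℝ) (ha1 : 1/4 ≤ a) (ha2 : a ≤ 3/4) (t : ℝ) (ht : 0 < t) (ht1 : t ≤ 1) :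
    (1 + t) ^ (2*a) * (∫ s in (0:ℝ)..t, (1 + t - s)⁻¹ * (t - s) ^ (-a) * (1 + s) ^ (-(3*a))) ≤ 64 := by
  set f : ℝ → ℝ := fun s => (1 + t - s)⁻¹ * (t - s) ^ (-a) * (1 + s) ^ (-(3*a)) with hfdef
  have hfnn : ∀ s ∈ Icc (0:ℝ) t, 0 ≤ f s := by
    intro s hs
    have h1 : (0:ℝ) ≤ (1 + t - s)⁻¹ := inv_nonneg.mpr (by linarith [hs.2])
    exact mul_nonneg (mul_nonneg h1 (rpow_nonneg (by linarith [hs.2]) _))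
      (rpow_nonneg (by linarith [hs.1]) _)
  have hb : ∀ s ∈ Icc (0:ℝ) t, f s ≤ (t - s) ^ (-(3/4) : ℝ) := by
    rintro s ⟨hs0, hst⟩
    have h1 : (1 + t - s)⁻¹ ≤ 1 := by
      rw [inv_le_one_iff₀]; right; linarith
    have h2 : (1 + s) ^ (-(3*a)) ≤ 1 :=
      rpow_le_one_of_one_le_of_nonpos (by linarith) (by linarith)
    have h3 : (t - s) ^ (-a) ≤ (t - s) ^ (-(3/4) : ℝ) := by
      rcases hst.lt_or_eq with h | h
      · exact rpow_le_rpow_of_exponent_ge (by linarith) (by linarith) (by linarith)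
      · rw [h, sub_self, Real.zero_rpow (show -a ≠ 0 by intro hc; rw [neg_eq_zero] at hc; linarith),
          Real.zero_rpow (by norm_num)]
    calc f s ≤ 1 * ((t - s) ^ (-(3/4):ℝ)) * 1 := by
          apply mul_le_mul (mul_le_mul h1 h3 (rpow_nonneg (by linarith) _) zero_le_one) h2
            (rpow_nonneg (by linarith) _) (mul_nonneg zero_le_one (rpow_nonneg (by linarith) _))
      _ = (t - s) ^ (-(3/4):ℝ) := by ring
  have hΙ : uIoc (0:ℝ) t = Ioc 0 t := uIoc_of_le ht.le
  have hint : IntervalIntegrable f volume 0 t := by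
    apply (intg_sub (t := t) (c := (0:ℝ)) (d := t) (by norm_num : (-1:ℝ) < -(3/4))).mono_fun'
      ((fmeas t a).aestronglyMeasurable)
    rw [hΙ]
    filter_upwards [ae_restrict_mem measurableSet_Ioc] with s hs
    rw [Real.norm_eq_abs, abs_of_nonneg (hfnn s ⟨hs.1.le, hs.2⟩)]
    exact hb s ⟨hs.1.le, hs.2⟩
  have hA : (∫ s in (0:ℝ)..t, f s) ≤ ∫ s in (0:ℝ)..t, (t - s) ^ (-(3/4):ℝ) :=
    integral_mono_on ht.le hint (intg_sub (by norm_num)) hb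
  rw [int_sub_eval (by norm_num) ht.le] at hA
  have hA4 : (∫ s in (0:ℝ)..t, f s) ≤ 4 := by
    have ht14 : t ^ ((1/4):ℝ) ≤ 1 := rpow_le_one ht.le ht1 (by norm_num)
    have : (t - 0) ^ (-(3/4) + 1 : ℝ) / (-(3/4) + 1) = 4 * t ^ ((1/4):ℝ) := by
      norm_num; ring
    rw [this] at hA; linarith
  have hA0 : 0 ≤ ∫ s in (0:ℝ)..t, f s := integral_nonneg ht.le hfnn
  have hpow : (1 + t) ^ (2*a) ≤ 4 := by
    calc (1+t)^(2*a) ≤ 2^(2*a) := rpow_le_rpow (by linarith) (by linarith) (by linarith)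
      _ ≤ 2^(2:ℝ) := rpow_le_rpow_of_exponent_le one_le_two (by linarith)
      _ = 4 := by
        rw [show (2:ℝ) = ((2:ℕ):ℝ) by norm_num, rpow_natCast]; norm_num
  calc (1 + t) ^ (2*a) * (∫ s in (0:ℝ)..t, f s) ≤ 4 * 4 :=
        mul_le_mul hpow hA4 hA0 (by norm_num)
    _ ≤ 64 := by norm_num


lemma key_large (a : ℝ) (ha1 : 1/4 ≤ a) (ha2 : a ≤ 3/4) (t : ℝ) (ht1 : 1 ≤ t) :
    (1 + t) ^ (2*a) * (∫ s in (0:ℝ)..t, (1 + t - s)⁻¹ * (t - s) ^ (-a) * (1 + s) ^ (-(3*a))) ≤ 64 := by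
  have ht : 0 < t := lt_of_lt_of_le one_pos ht1
  set m : ℝ := t/2 with hmdef
  have hm : 0 < m := by positivity
  have hmt : m ≤ t := by simp only [hmdef]; linarith
  have hP : (0:ℝ) < 1 + t := by linarith
  have hQ : (0:ℝ) < 1 + m := by linarith
  set f : ℝ → ℝ := fun s => (1 + t - s)⁻¹ * (t - s) ^ (-a) * (1 + s) ^ (-(3*a)) with hfdef
  -- continuity on [0, m]
  have hcont1 : ContinuousOn f (Icc 0 m) := by
    have c1 : ContinuousOn (fun s : ℝ => (1 + t - s)⁻¹) (Icc 0 m) := by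
      apply ContinuousOn.inv₀ ((continuous_const.sub continuous_id).continuousOn)
      intro x hx
      have : x ≤ m := hx.2
      intro hc; simp only [Pi.sub_apply, Pi.add_apply, id] at hc; nlinarith [hx.1]
    have c2 : ContinuousOn (fun s : ℝ => (t - s) ^ (-a)) (Icc 0 m) := by
      apply ContinuousOn.rpow_const ((continuous_const.sub continuous_id).continuousOn)
      intro x hx
      left
      have : x ≤ m := hx.2
      intro hc; simp only [Pi.sub_apply, Pi.add_apply, id] at hc; nlinarith
    have c3 : ContinuousOn (fun s : ℝ => (1 + s) ^ (-(3*a))) (Icc 0 m) := by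
      apply ContinuousOn.rpow_const ((continuous_const.add continuous_id).continuousOn)
      intro x hx
      left
      have : (0:ℝ) ≤ x := hx.1
      intro hc; simp only [Pi.sub_apply, Pi.add_apply, id] at hc; linarith
    exact (c1.mul c2).mul c3
  have hint1 : IntervalIntegrable f volume 0 m := by
    apply ContinuousOn.intervalIntegrable
    rwa [uIcc_of_le hm.le]
  -- part 2: domination
  set g2 : ℝ → ℝ := fun s => (1 + m) ^ (-(3*a)) * (t - s) ^ (-(7/8) : ℝ) with hg2def
  have hg2int : IntervalIntegrable g2 volume m t :=
    (intg_sub (by norm_num)).const_mul _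
  have hb2 : ∀ s ∈ Icc m t, f s ≤ g2 s := by
    rintro s ⟨hsm, hst⟩
    have e : 1 + t - s = 1 + (t - s) := by ring
    have h1 : (1 + t - s)⁻¹ * (t - s) ^ (-a) ≤ (t - s) ^ (-(7/8) : ℝ) := by
      rw [e]; exact keypt ha1 ha2 (by linarith)
    have h2 : (1 + s) ^ (-(3*a)) ≤ (1 + m) ^ (-(3*a)) :=
      rpow_le_rpow_of_nonpos hQ (by linarith) (by linarith)
    calc f s = ((1 + t - s)⁻¹ * (t - s) ^ (-a)) * (1 + s) ^ (-(3*a)) := rfl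
      _ ≤ (t - s) ^ (-(7/8):ℝ) * (1 + m) ^ (-(3*a)) := by
          apply mul_le_mul h1 h2 (rpow_nonneg (by linarith) _) (rpow_nonneg (by linarith) _)
      _ = g2 s := by rw [hg2def]; ring
  have hΙ2 : uIoc m t = Ioc m t := uIoc_of_le hmt
  have hfnn : ∀ s ∈ Icc (0:ℝ) t, 0 ≤ f s := by
    intro s hs
    have h1 : (0:ℝ) ≤ (1 + t - s)⁻¹ := inv_nonneg.mpr (by linarith [hs.2])
    exact mul_nonneg (mul_nonneg h1 (rpow_nonneg (by linarith [hs.2]) _))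
      (rpow_nonneg (by linarith [hs.1]) _)
  have hint2 : IntervalIntegrable f volume m t := by
    apply hg2int.mono_fun' ((fmeas t a).aestronglyMeasurable)
    rw [hΙ2]
    filter_upwards [ae_restrict_mem measurableSet_Ioc] with s hs
    rw [Real.norm_eq_abs, abs_of_nonneg (hfnn s ⟨by linarith [hs.1.le, hm.le], hs.2⟩)]
    exact hb2 s ⟨hs.1.le, hs.2⟩
  -- split
  have hsplit : (∫ s in (0:ℝ)..t, f s) = (∫ s in (0:ℝ)..m, f s) + ∫ s in m..t, f s :=
    (integral_add_adjacent_intervals hint1 hint2).symm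
  -- P2 bound
  have hP2 : (∫ s in m..t, f s) ≤ (1 + m) ^ (-(3*a)) * (8 * m ^ ((1/8):ℝ)) := by
    calc (∫ s in m..t, f s) ≤ ∫ s in m..t, g2 s := integral_mono_on hmt hint2 hg2int hb2
      _ = (1 + m) ^ (-(3*a)) * ∫ s in m..t, (t - s) ^ (-(7/8):ℝ) := by
          rw [hg2def]; exact integral_const_mul _ _
      _ = (1 + m) ^ (-(3*a)) * (8 * m ^ ((1/8):ℝ)) := by
          rw [int_sub_eval (by norm_num) hmt]
          congr 1
          rw [show t - m = m by rw [hmdef]; ring]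
          norm_num; ring
  -- P1 bound
  set g1 : ℝ → ℝ := fun s => (2 * (1 + t)⁻¹ * m ^ (-a)) * (1 + s) ^ (-(3/4) : ℝ) with hg1def
  have hg1int : IntervalIntegrable g1 volume 0 m := by
    apply IntervalIntegrable.const_mul
    apply ContinuousOn.intervalIntegrable
    apply ContinuousOn.rpow_const ((continuous_const.add continuous_id).continuousOn)
    intro x hx
    left
    rw [uIcc_of_le hm.le] at hx
    have : (0:ℝ) ≤ x := hx.1
    intro hc; simp only [Pi.sub_apply, Pi.add_apply, id] at hc; linarith
  have hb1 : ∀ s ∈ Icc (0:ℝ) m, f s ≤ g1 s := by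
    rintro s ⟨hs0, hsm⟩
    have h1 : (1 + t - s)⁻¹ ≤ 2 * (1 + t)⁻¹ := by
      have e1 : (1 + t)/2 ≤ 1 + t - s := by rw [hmdef] at hsm; linarith
      calc (1 + t - s)⁻¹ ≤ ((1 + t)/2)⁻¹ := inv_anti₀ (by linarith) e1
        _ = 2 * (1 + t)⁻¹ := by rw [inv_div]; ring
    have h2 : (t - s) ^ (-a) ≤ m ^ (-a) :=
      rpow_le_rpow_of_nonpos hm (by linarith) (by linarith)
    have h3 : (1 + s) ^ (-(3*a)) ≤ (1 + s) ^ (-(3/4) : ℝ) :=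
      rpow_le_rpow_of_exponent_le (by linarith) (by linarith)
    calc f s = ((1 + t - s)⁻¹ * (t - s) ^ (-a)) * (1 + s) ^ (-(3*a)) := rfl
      _ ≤ ((2 * (1 + t)⁻¹) * m ^ (-a)) * (1 + s) ^ (-(3/4):ℝ) := by
          have hts : (0:ℝ) ≤ t - s := by linarith
          have h1s : (0:ℝ) ≤ 1 + s := by linarith
          have hXnn : (0:ℝ) ≤ (1 + t - s)⁻¹ * (t - s) ^ (-a) :=
            mul_nonneg (inv_nonneg.mpr (by linarith)) (rpow_nonneg hts _)
          have inner : (1 + t - s)⁻¹ * (t - s) ^ (-a) ≤ (2 * (1 + t)⁻¹) * m ^ (-a) :=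
            mul_le_mul h1 h2 (rpow_nonneg hts _) (by positivity)
          calc ((1 + t - s)⁻¹ * (t - s) ^ (-a)) * (1 + s) ^ (-(3*a))
              ≤ ((1 + t - s)⁻¹ * (t - s) ^ (-a)) * (1 + s) ^ (-(3/4):ℝ) :=
                mul_le_mul_of_nonneg_left h3 hXnn
            _ ≤ ((2 * (1 + t)⁻¹) * m ^ (-a)) * (1 + s) ^ (-(3/4):ℝ) :=
                mul_le_mul_of_nonneg_right inner (rpow_nonneg h1s _)
      _ = g1 s := by rw [hg1def]
  have hP1 : (∫ s in (0:ℝ)..m, f s) ≤ (2 * (1 + t)⁻¹ * m ^ (-a)) * (4 * (1 + t) ^ ((1/4):ℝ)) := by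
    have step : (∫ s in (0:ℝ)..m, f s) ≤ ∫ s in (0:ℝ)..m, g1 s :=
      integral_mono_on hm.le hint1 hg1int hb1
    have ev : (∫ s in (0:ℝ)..m, g1 s)
        = (2 * (1 + t)⁻¹ * m ^ (-a)) * (((1 + m) ^ ((1/4):ℝ) - 1) / (1/4)) := by
      rw [hg1def]
      rw [intervalIntegral.integral_const_mul, int_add_eval (by norm_num) hm.le]
      norm_num
    have hle : ((1 + m) ^ ((1/4):ℝ) - 1) / (1/4) ≤ 4 * (1 + t) ^ ((1/4):ℝ) := by
      have h14 : (1 + m) ^ ((1/4):ℝ) ≤ (1 + t) ^ ((1/4):ℝ) :=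
        rpow_le_rpow (by linarith) (by linarith) (by norm_num)
      have : (0:ℝ) ≤ (1 + t) ^ ((1/4):ℝ) := rpow_nonneg (by linarith) _
      linarith
    calc (∫ s in (0:ℝ)..m, f s) ≤ (2 * (1 + t)⁻¹ * m ^ (-a)) * (((1 + m) ^ ((1/4):ℝ) - 1) / (1/4)) := by
          rw [← ev]; exact step
      _ ≤ (2 * (1 + t)⁻¹ * m ^ (-a)) * (4 * (1 + t) ^ ((1/4):ℝ)) := by
          apply mul_le_mul_of_nonneg_left hle (by positivity)
  -- arithmetic: T1
  have h2pow : (2:ℝ) ^ (2*a) ≤ 4 := by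
    calc (2:ℝ)^(2*a) ≤ 2^(2:ℝ) := rpow_le_rpow_of_exponent_le one_le_two (by linarith)
      _ = 4 := by rw [show (2:ℝ) = ((2:ℕ):ℝ) by norm_num, rpow_natCast]; norm_num
  have hma : m ^ (-a) ≤ (1 + t) ^ (-a) * 4 := by
    have h4 : (1 + t)/4 ≤ m := by rw [hmdef]; linarith
    have e : ((1 + t)/4 : ℝ) ^ (-a) = (1 + t) ^ (-a) * ((4:ℝ) ^ a) := by
      rw [Real.div_rpow (by linarith) (by norm_num), div_eq_mul_inv,
        Real.rpow_neg (by norm_num : (0:ℝ) ≤ 4), inv_inv]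
    have h4a : (4:ℝ) ^ a ≤ 4 := by
      calc (4:ℝ)^a ≤ 4^(1:ℝ) := rpow_le_rpow_of_exponent_le (by norm_num) (by linarith)
        _ = 4 := rpow_one _
    calc m ^ (-a) ≤ ((1 + t)/4) ^ (-a) := rpow_le_rpow_of_nonpos (by positivity) h4 (by linarith)
      _ = (1 + t) ^ (-a) * ((4:ℝ) ^ a) := e
      _ ≤ (1 + t) ^ (-a) * 4 := by
          apply mul_le_mul_of_nonneg_left h4a (rpow_nonneg (by linarith) _)
  have hT1 : (1 + t) ^ (2*a) * ((2 * (1 + t)⁻¹ * m ^ (-a)) * (4 * (1 + t) ^ ((1/4):ℝ))) ≤ 32 := by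
    calc (1 + t) ^ (2*a) * ((2 * (1 + t)⁻¹ * m ^ (-a)) * (4 * (1 + t) ^ ((1/4):ℝ)))
        ≤ (1 + t) ^ (2*a) * ((2 * (1 + t)⁻¹ * ((1 + t) ^ (-a) * 4)) * (4 * (1 + t) ^ ((1/4):ℝ))) := by
          apply mul_le_mul_of_nonneg_left _ (rpow_nonneg (by linarith) _)
          apply mul_le_mul_of_nonneg_right _ (by positivity)
          exact mul_le_mul_of_nonneg_left hma (by positivity)
      _ = 32 * ((1 + t) ^ (2*a) * (1 + t) ^ (-a) * (1 + t) ^ ((1/4):ℝ) * (1 + t) ^ (-1:ℝ)) := by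
          rw [Real.rpow_neg_one]; ring
      _ = 32 * (1 + t) ^ (2*a + -a + 1/4 + -1) := by
          rw [Real.rpow_add hP, Real.rpow_add hP, Real.rpow_add hP]
      _ ≤ 32 * 1 := by
          apply mul_le_mul_of_nonneg_left _ (by norm_num)
          exact rpow_le_one_of_one_le_of_nonpos (by linarith) (by linarith)
      _ = 32 := mul_one _
  -- arithmetic: T2
  have hT2 : (1 + t) ^ (2*a) * ((1 + m) ^ (-(3*a)) * (8 * m ^ ((1/8):ℝ))) ≤ 32 := by
    have hbig : (1 + t) ^ (2*a) ≤ 4 * (1 + m) ^ (2*a) := by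
      have e1 : (1 + t) ≤ 2 * (1 + m) := by rw [hmdef]; linarith
      calc (1 + t) ^ (2*a) ≤ (2 * (1 + m)) ^ (2*a) := rpow_le_rpow (by linarith) e1 (by linarith)
        _ = 2 ^ (2*a) * (1 + m) ^ (2*a) := mul_rpow (by norm_num) (by linarith)
        _ ≤ 4 * (1 + m) ^ (2*a) := by
            apply mul_le_mul_of_nonneg_right h2pow (rpow_nonneg (by linarith) _)
    have hcol : (1 + m) ^ (2*a) * (1 + m) ^ (-(3*a)) ≤ m ^ (-(1/8):ℝ) := by
      have e : (1 + m) ^ (2*a) * (1 + m) ^ (-(3*a)) = (1 + m) ^ (2*a + -(3*a)) :=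
        (Real.rpow_add hQ _ _).symm
      rw [e]
      calc (1 + m) ^ (2*a + -(3*a)) ≤ (1 + m) ^ (-(1/8):ℝ) :=
            rpow_le_rpow_of_exponent_le (by linarith) (by linarith)
        _ ≤ m ^ (-(1/8):ℝ) := rpow_le_rpow_of_nonpos hm (by linarith) (by norm_num)
    have hmm : m ^ (-(1/8):ℝ) * m ^ ((1/8):ℝ) = 1 := by
      rw [← Real.rpow_add hm]; norm_num
    calc (1 + t) ^ (2*a) * ((1 + m) ^ (-(3*a)) * (8 * m ^ ((1/8):ℝ)))
        ≤ (4 * (1 + m) ^ (2*a)) * ((1 + m) ^ (-(3*a)) * (8 * m ^ ((1/8):ℝ))) := by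
          apply mul_le_mul_of_nonneg_right hbig
          apply mul_nonneg (rpow_nonneg (by linarith) _)
          apply mul_nonneg (by norm_num) (rpow_nonneg hm.le _)
      _ = 32 * (((1 + m) ^ (2*a) * (1 + m) ^ (-(3*a))) * m ^ ((1/8):ℝ)) := by ring
      _ ≤ 32 * (m ^ (-(1/8):ℝ) * m ^ ((1/8):ℝ)) := by
          apply mul_le_mul_of_nonneg_left _ (by norm_num)
          apply mul_le_mul_of_nonneg_right hcol (rpow_nonneg hm.le _)
      _ = 32 := by rw [hmm]; norm_num
  -- assemble
  rw [hsplit, mul_add]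
  have hA1 : (1 + t) ^ (2*a) * (∫ s in (0:ℝ)..m, f s) ≤ 32 :=
    le_trans (mul_le_mul_of_nonneg_left hP1 (rpow_nonneg (by linarith) _)) hT1
  have hA2 : (1 + t) ^ (2*a) * (∫ s in m..t, f s) ≤ 32 :=
    le_trans (mul_le_mul_of_nonneg_left hP2 (rpow_nonneg (by linarith) _)) hT2
  linarith

/-- Optimal decay convolution estimate: for `1 ≤ n ≤ 3`,
`(1+t)^{n/2} ∫₀ᵗ (1+t−s)⁻¹ (t−s)^{−n/4} (1+s)^{−3n/4} ds ≤ C`. -/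
theorem stmt8 (n : ℕ) (hn1 : 1 ≤ n) (hn3 : n ≤ 3) :
    ∃ C : ℝ, 0 < C ∧ ∀ t : ℝ, 0 < t →
      (1 + t) ^ ((n : ℝ) / 2) *
        (∫ s in (0 : ℝ)..t,
          (1 + t - s)⁻¹ * (t - s) ^ (-(n : ℝ) / 4) * (1 + s) ^ (-(3 * (n : ℝ)) / 4)) ≤ C := by
  refine ⟨64, by norm_num, fun t ht => ?_⟩
  have hn1' : (1:ℝ) ≤ (n:ℝ) := by exact_mod_cast hn1
  have hn3' : (n:ℝ) ≤ 3 := by exact_mod_cast hn3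
  set a : ℝ := (n:ℝ)/4 with hadef
  have ha1 : 1/4 ≤ a := by rw [hadef]; linarith
  have ha2 : a ≤ 3/4 := by rw [hadef]; linarith
  have e1 : ((n:ℝ)) / 2 = 2 * a := by rw [hadef]; ring
  have e2 : (-(n : ℝ)) / 4 = -a := by rw [hadef]; ring
  have e3 : (-(3 * (n : ℝ))) / 4 = -(3 * a) := by rw [hadef]; ring
  rw [e1, e2, e3]
  rcases le_total t 1 with h | h
  · exact key_small a ha1 ha2 t ht h
  · exact key_large a ha1 ha2 t h
end

section
/- For every n ≥ 1 there exists a constant C > 0 such that for every Schwartz function w : ℝⁿ → ℝ one has ‖∇w‖_{L⁴(ℝⁿ)}² ≤ C ‖w‖_{L∞(ℝⁿ)} ‖Δw‖_{L²(ℝⁿ)}, i.e. ( ∫_{ℝⁿ} |∇w(x)|⁴ dx )^{1/2} ≤ C ( sup_{x} |w(x)| ) ( ∫_{ℝⁿ} |Δw(x)|² dx )^{1/2}. -/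
open MeasureTheory SchwartzMap

namespace GNaux
variable {n : ℕ}

noncomputable def ee (n : ℕ) (i : Fin n) : EuclideanSpace ℝ (Fin n) := EuclideanSpace.single i 1

noncomputable def D (i : Fin n) (f : SchwartzMap (EuclideanSpace ℝ (Fin n)) ℝ) :
    SchwartzMap (EuclideanSpace ℝ (Fin n)) ℝ := LineDeriv.lineDerivOp (ee n i) f

lemma D_apply (i : Fin n) (f : SchwartzMap (EuclideanSpace ℝ (Fin n)) ℝ) (x) :
    D i f x = fderiv ℝ f x (ee n i) := SchwartzMap.lineDerivOp_apply_eq_fderiv (ee n i) f x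

/-- Bounded continuous predicate. -/
def BC (r : EuclideanSpace ℝ (Fin n) → ℝ) : Prop :=
  Continuous r ∧ ∃ C, ∀ x, |r x| ≤ C

lemma BC.of_schwartz (f : SchwartzMap (EuclideanSpace ℝ (Fin n)) ℝ) : BC (⇑f) :=
  ⟨f.continuous, ⟨SchwartzMap.seminorm ℝ 0 0 f, fun x => by
    simpa [Real.norm_eq_abs] using norm_le_seminorm ℝ f x⟩⟩

lemma BC.mul {r s : EuclideanSpace ℝ (Fin n) → ℝ} (hr : BC r) (hs : BC s) :
    BC (fun x => r x * s x) := by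
  obtain ⟨hrc, Cr, hCr⟩ := hr
  obtain ⟨hsc, Cs, hCs⟩ := hs
  have hCr0 : 0 ≤ Cr := le_trans (abs_nonneg _) (hCr 0)
  exact ⟨hrc.mul hsc, ⟨Cr * Cs, fun x => by
    rw [abs_mul]
    exact mul_le_mul (hCr x) (hCs x) (abs_nonneg _) hCr0⟩⟩

lemma BC.sum {ι : Type*} (s : Finset ι) {r : ι → EuclideanSpace ℝ (Fin n) → ℝ}
    (hr : ∀ i ∈ s, BC (r i)) : BC (fun x => ∑ i ∈ s, r i x) := by
  classical
  induction s using Finset.induction_on with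
  | empty => exact ⟨continuous_const, ⟨0, by simp⟩⟩
  | insert a s hnotmem ih =>
    have h1 := hr a (Finset.mem_insert_self a s)
    have h2 := ih fun i hi => hr i (Finset.mem_insert_of_mem hi)
    obtain ⟨h1c, C1, hC1⟩ := h1
    obtain ⟨h2c, C2, hC2⟩ := h2
    refine ⟨?_, ⟨C1 + C2, fun x => ?_⟩⟩
    · simp only [Finset.sum_insert hnotmem]; exact h1c.add h2c
    · simp only [Finset.sum_insert hnotmem]
      exact (abs_add_le _ _).trans (add_le_add (hC1 x) (hC2 x))

lemma BC.sqrt {r : EuclideanSpace ℝ (Fin n) → ℝ} (hr : BC r) :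
    BC (fun x => Real.sqrt (r x)) := by
  obtain ⟨hrc, C, hC⟩ := hr
  refine ⟨Real.continuous_sqrt.comp hrc, ⟨Real.sqrt C, fun x => ?_⟩⟩
  rw [abs_of_nonneg (Real.sqrt_nonneg _)]
  exact Real.sqrt_le_sqrt ((le_abs_self _).trans (hC x))

/-- product of a Schwartz function and a bounded continuous function is integrable. -/
lemma integrable_mul (f : SchwartzMap (EuclideanSpace ℝ (Fin n)) ℝ)
    {r : EuclideanSpace ℝ (Fin n) → ℝ} (hr : BC r) :
    Integrable (fun x => f x * r x) volume := by
  obtain ⟨hrc, C, hC⟩ := hr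
  have : Integrable (fun x => r x * f x) volume :=
    f.integrable.bdd_mul hrc.aestronglyMeasurable (Filter.Eventually.of_forall fun x => by simpa [Real.norm_eq_abs] using hC x)
  exact this.congr (Filter.Eventually.of_forall fun x => mul_comm _ _)

lemma D_differentiable (f : SchwartzMap (EuclideanSpace ℝ (Fin n)) ℝ) (i : Fin n) :
    Differentiable ℝ (⇑(D i f)) := (D i f).differentiable

lemma D_comm (f : SchwartzMap (EuclideanSpace ℝ (Fin n)) ℝ) (i j : Fin n) :
    D i (D j f) = D j (D i f) := by
  ext x
  have hd : Differentiable ℝ (fderiv ℝ (⇑f)) :=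
    (((f.smooth ⊤).fderiv_right (m := ((⊤:ℕ∞) : WithTop ℕ∞)) (by decide)).differentiable (by decide))
  have key : ∀ u v : EuclideanSpace ℝ (Fin n),
      fderiv ℝ (fun y => fderiv ℝ f y u) x v = fderiv ℝ (fderiv ℝ (⇑f)) x v u := by
    intro u v
    have h := fderiv_clm_apply (c := fderiv ℝ (⇑f)) (u := fun _ => u) (x := x)
      (hd x) (differentiableAt_const u)
    have : fderiv ℝ (fun y => fderiv ℝ f y u) x = ((fderiv ℝ (fderiv ℝ (⇑f)) x).flip u) := by
      simpa using h
    rw [this]; rfl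
  have hsymm : IsSymmSndFDerivAt ℝ (⇑f) x :=
    (f.smooth ⊤).contDiffAt.isSymmSndFDerivAt (by simp; decide)
  have e1 : (⇑(D j f)) = fun y => fderiv ℝ f y (ee n j) := funext fun y => D_apply j f y
  have e2 : (⇑(D i f)) = fun y => fderiv ℝ f y (ee n i) := funext fun y => D_apply i f y
  rw [D_apply, D_apply, e1, e2, key, key, hsymm.eq]

/-- general integration by parts -/
lemma ibp' (i : Fin n) (u : SchwartzMap (EuclideanSpace ℝ (Fin n)) ℝ)
    {g g' : EuclideanSpace ℝ (Fin n) → ℝ}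
    (hg : Differentiable ℝ g) (hg' : ∀ x, fderiv ℝ g x (ee n i) = g' x)
    (int1 : Integrable (fun x => D i u x * g x) volume)
    (int2 : Integrable (fun x => u x * g' x) volume)
    (int3 : Integrable (fun x => u x * g x) volume) :
    ∫ x, u x * g' x = -∫ x, D i u x * g x := by
  have h := integral_mul_fderiv_eq_neg_fderiv_mul_of_integrable
    (f := ⇑u) (g := g) (v := ee n i) (μ := volume)
    (by simpa only [← D_apply] using int1)
    (by simp only [hg']; exact int2)
    int3 (fun x _ => u.differentiableAt) (fun x _ => hg x)
  simp only [hg', ← D_apply] at h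
  exact h

lemma ibp (i : Fin n) (u g : SchwartzMap (EuclideanSpace ℝ (Fin n)) ℝ) :
    ∫ x, u x * D i g x = -∫ x, D i u x * g x :=
  ibp' i u g.differentiable (fun x => (D_apply i g x).symm)
    (integrable_mul (D i u) (BC.of_schwartz g))
    (integrable_mul u (BC.of_schwartz (D i g)))
    (integrable_mul u (BC.of_schwartz g))

/-- Step A, per pair -/
lemma stepA (w : SchwartzMap (EuclideanSpace ℝ (Fin n)) ℝ) (i j : Fin n) :
    ∫ x, D i (D j w) x * D i (D j w) x = ∫ x, D i (D i w) x * D j (D j w) x := by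
  have h1 : ∫ x, D i (D j w) x * D i (D j w) x = -∫ x, D i (D i (D j w)) x * D j w x :=
    ibp i (D i (D j w)) (D j w)
  have h2 : D i (D i (D j w)) = D j (D i (D i w)) := by
    rw [D_comm w i j, D_comm (D i w) i j]
  have h3 : ∫ x, D j w x * D j (D i (D i w)) x = -∫ x, D j (D j w) x * D i (D i w) x :=
    ibp j (D j w) (D i (D i w))
  rw [h1, h2]
  have : ∫ x, D j (D i (D i w)) x * D j w x = ∫ x, D j w x * D j (D i (D i w)) x := by
    congr 1; funext x; ring
  rw [this, h3, neg_neg]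
  congr 1; funext x; ring

lemma BC.const (c : ℝ) : BC (n := n) (fun _ => c) :=
  ⟨continuous_const, ⟨|c|, fun _ => le_rfl⟩⟩

lemma hessIdent (w : SchwartzMap (EuclideanSpace ℝ (Fin n)) ℝ) :
    ∑ p : Fin n × Fin n, ∫ x, D p.1 (D p.2 w) x * D p.1 (D p.2 w) x
      = ∫ x, (∑ i, D i (D i w) x) * (∑ j, D j (D j w) x) := by
  have hint : ∀ (i j : Fin n), Integrable (fun x => D i (D i w) x * D j (D j w) x) volume :=
    fun i j => integrable_mul _ (BC.of_schwartz _)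
  have : (∫ x, (∑ i, D i (D i w) x) * (∑ j, D j (D j w) x))
      = ∫ x, ∑ i, ∑ j, D i (D i w) x * D j (D j w) x := by
    congr 1; ext x; rw [Finset.sum_mul_sum]
  rw [this, integral_finset_sum _ (fun i _ => integrable_finset_sum _ (fun j _ => hint i j))]
  rw [← Finset.univ_product_univ, Finset.sum_product]
  refine Finset.sum_congr rfl fun i _ => ?_
  rw [integral_finset_sum _ (fun j _ => hint i j)]
  exact Finset.sum_congr rfl fun j _ => stepA w i j

lemma BC.add {r s : EuclideanSpace ℝ (Fin n) → ℝ} (hr : BC r) (hs : BC s) :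
    BC (fun x => r x + s x) := by
  obtain ⟨hrc, Cr, hCr⟩ := hr
  obtain ⟨hsc, Cs, hCs⟩ := hs
  exact ⟨hrc.add hsc, ⟨Cr + Cs, fun x => (abs_add_le _ _).trans (add_le_add (hCr x) (hCs x))⟩⟩

lemma stepB (w : SchwartzMap (EuclideanSpace ℝ (Fin n)) ℝ) :
    ∫ x, (∑ j, D j w x * D j w x) * (∑ j, D j w x * D j w x)
      = -((∫ x, w x * ((∑ i, D i (D i w) x) * (∑ j, D j w x * D j w x)))
          + 2 * ∫ x, w x * (∑ p : Fin n × Fin n,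
              D p.1 w x * D p.2 w x * D p.1 (D p.2 w) x)) := by
  classical
  set F : EuclideanSpace ℝ (Fin n) → ℝ := fun x => ∑ j, D j w x * D j w x with hF
  have hFBC : BC F := BC.sum _ (fun j _ => (BC.of_schwartz (D j w)).mul (BC.of_schwartz (D j w)))
  have hFd : ∀ x, HasFDerivAt F (∑ j, (2 * D j w x) • fderiv ℝ (⇑(D j w)) x) x := by
    intro x
    refine HasFDerivAt.fun_sum fun j _ => ?_
    have h := ((D j w).differentiable x).hasFDerivAt
    have h2 := h.fun_mul h
    rw [two_mul, add_smul]; exact h2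
  set g : Fin n → EuclideanSpace ℝ (Fin n) → ℝ := fun i x => D i w x * F x with hg
  set g' : Fin n → EuclideanSpace ℝ (Fin n) → ℝ := fun i x =>
    D i (D i w) x * F x + D i w x * (∑ j, 2 * (D j w x * D i (D j w) x)) with hg'
  have hgd : ∀ i x, HasFDerivAt (g i)
      (D i w x • (∑ j, (2 * D j w x) • fderiv ℝ (⇑(D j w)) x)
        + F x • fderiv ℝ (⇑(D i w)) x) x := by
    intro i x
    exact (((D i w).differentiable x).hasFDerivAt).mul (hFd x)
  have hgdiff : ∀ i, Differentiable ℝ (g i) := fun i x => ((hgd i x).differentiableAt)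
  have hgder : ∀ i x, fderiv ℝ (g i) x (ee n i) = g' i x := by
    intro i x
    rw [(hgd i x).fderiv]
    simp only [ContinuousLinearMap.add_apply, ContinuousLinearMap.smul_apply,
      ContinuousLinearMap.coe_sum', Finset.sum_apply, smul_eq_mul, ← D_apply, hg']
    have hs : (∑ j, 2 * (D j w x * D i (D j w) x))
        = ∑ j, 2 * D j w x * D i (D j w) x :=
      Finset.sum_congr rfl fun j _ => by ring
    rw [hs]
    ring
  have hsumBC : ∀ i, BC (fun x => ∑ j, 2 * (D j w x * D i (D j w) x)) := fun i =>
    BC.sum _ fun j _ =>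
      (BC.const 2).mul ((BC.of_schwartz (D j w)).mul (BC.of_schwartz (D i (D j w))))
  have hg'BC : ∀ i, BC (g' i) := fun i =>
    ((BC.of_schwartz (D i (D i w))).mul hFBC).add ((BC.of_schwartz (D i w)).mul (hsumBC i))
  have hgBC : ∀ i, BC (g i) := fun i => (BC.of_schwartz (D i w)).mul hFBC
  have int1 : ∀ i, Integrable (fun x => D i w x * g i x) volume := fun i =>
    integrable_mul (D i w) (hgBC i)
  have int2 : ∀ i, Integrable (fun x => w x * g' i x) volume := fun i =>
    integrable_mul w (hg'BC i)
  have int3 : ∀ i, Integrable (fun x => w x * g i x) volume := fun i =>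
    integrable_mul w (hgBC i)
  have hibp : ∀ i, ∫ x, D i w x * g i x = -∫ x, w x * g' i x := by
    intro i
    have h := ibp' i w (hgdiff i) (hgder i) (int1 i) (int2 i) (int3 i)
    rw [h, neg_neg]
  -- sum over i
  have sumL : ∫ x, F x * F x = ∑ i, ∫ x, D i w x * g i x := by
    rw [← integral_finset_sum _ (fun i _ => int1 i)]
    congr 1; ext x
    rw [hg]
    rw [show (∑ i, D i w x * (D i w x * F x)) = (∑ i, D i w x * D i w x) * F x by
      rw [Finset.sum_mul]; exact Finset.sum_congr rfl fun i _ => by ring]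
  have sumR : ∑ i, ∫ x, w x * g' i x
      = (∫ x, w x * ((∑ i, D i (D i w) x) * F x))
        + 2 * ∫ x, w x * (∑ p : Fin n × Fin n,
            D p.1 w x * D p.2 w x * D p.1 (D p.2 w) x) := by
    rw [← integral_finset_sum _ (fun i _ => int2 i)]
    have key : ∀ x, (∑ i, w x * g' i x)
        = w x * ((∑ i, D i (D i w) x) * F x)
          + 2 * (w x * (∑ p : Fin n × Fin n,
              D p.1 w x * D p.2 w x * D p.1 (D p.2 w) x)) := by
      intro x
      rw [← Finset.univ_product_univ, Finset.sum_product]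
      simp only [hg', mul_add, Finset.sum_add_distrib]
      congr 1
      · rw [Finset.sum_mul, Finset.mul_sum]
        try exact Finset.sum_congr rfl fun i _ => by ring
      · rw [Finset.mul_sum, Finset.mul_sum]
        refine Finset.sum_congr rfl fun i _ => ?_
        rw [Finset.mul_sum, Finset.mul_sum, Finset.mul_sum, Finset.mul_sum]
        exact Finset.sum_congr rfl fun j _ => by ring
    rw [show (fun x => ∑ i, w x * g' i x) = fun x =>
        w x * ((∑ i, D i (D i w) x) * F x)
          + 2 * (w x * (∑ p : Fin n × Fin n,
              D p.1 w x * D p.2 w x * D p.1 (D p.2 w) x)) from funext key]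
    rw [integral_add (integrable_mul w ((BC.sum _ fun i _ => BC.of_schwartz (D i (D i w))).mul hFBC))
      (((integrable_mul w (BC.sum _ fun p _ => ((BC.of_schwartz (D p.1 w)).mul
        (BC.of_schwartz (D p.2 w))).mul (BC.of_schwartz (D p.1 (D p.2 w))))).const_mul 2))]
    rw [integral_const_mul]
  calc ∫ x, F x * F x = ∑ i, ∫ x, D i w x * g i x := sumL
    _ = ∑ i, -∫ x, w x * g' i x := Finset.sum_congr rfl fun i _ => hibp i
    _ = -∑ i, ∫ x, w x * g' i x := by rw [Finset.sum_neg_distrib]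
    _ = _ := by rw [sumR]

lemma intCS {α : Type*} [MeasurableSpace α] {μ : Measure α} {f g : α → ℝ}
    (hf0 : ∀ x, 0 ≤ f x) (hg0 : ∀ x, 0 ≤ g x)
    (hfm : AEStronglyMeasurable f μ) (hgm : AEStronglyMeasurable g μ)
    (hf2 : Integrable (fun x => f x ^ 2) μ) (hg2 : Integrable (fun x => g x ^ 2) μ) :
    ∫ x, f x * g x ∂μ ≤ Real.sqrt (∫ x, f x ^ 2 ∂μ) * Real.sqrt (∫ x, g x ^ 2 ∂μ) := by
  have hpq : Real.HolderConjugate 2 2 := by constructor <;> norm_num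
  have hfL : MemLp f (ENNReal.ofReal 2) μ := by
    rw [show ENNReal.ofReal 2 = 2 by norm_num]
    exact (memLp_two_iff_integrable_sq hfm).mpr hf2
  have hgL : MemLp g (ENNReal.ofReal 2) μ := by
    rw [show ENNReal.ofReal 2 = 2 by norm_num]
    exact (memLp_two_iff_integrable_sq hgm).mpr hg2
  have h := integral_mul_le_Lp_mul_Lq_of_nonneg hpq
    (Filter.Eventually.of_forall hf0) (Filter.Eventually.of_forall hg0) hfL hgL
  calc ∫ x, f x * g x ∂μ ≤ (∫ a, f a ^ (2:ℝ) ∂μ) ^ (1/2:ℝ) * (∫ a, g a ^ (2:ℝ) ∂μ) ^ (1/2:ℝ) := h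
    _ = Real.sqrt (∫ x, f x ^ 2 ∂μ) * Real.sqrt (∫ x, g x ^ 2 ∂μ) := by
      rw [← Real.sqrt_eq_rpow, ← Real.sqrt_eq_rpow]
      have e : ∀ h : _ → ℝ, ∫ a, h a ^ (2:ℝ) ∂μ = ∫ a, h a ^ 2 ∂μ := fun h => by
        apply integral_congr_ae; filter_upwards with a
        rw [← Real.rpow_natCast (h a) 2]; norm_num
      rw [e f, e g]


lemma sup_abs_bound (w : SchwartzMap (EuclideanSpace ℝ (Fin n)) ℝ) (x) :
    |w x| ≤ ⨆ y, |w y| := by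
  refine le_ciSup (f := fun y => |w y|) ⟨SchwartzMap.seminorm ℝ 0 0 w, ?_⟩ x
  rintro _ ⟨y, rfl⟩
  simpa [Real.norm_eq_abs] using SchwartzMap.norm_le_seminorm ℝ w y

lemma mainIneq (w : SchwartzMap (EuclideanSpace ℝ (Fin n)) ℝ) :
    Real.sqrt (∫ x, (∑ j, D j w x * D j w x) * (∑ j, D j w x * D j w x))
      ≤ 3 * (⨆ x, |w x|) * Real.sqrt (∫ x, (∑ i, D i (D i w) x) * (∑ i, D i (D i w) x)) := by
  classical
  have hsb := stepB w
  have hhess := hessIdent w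
  set F : EuclideanSpace ℝ (Fin n) → ℝ := fun x => ∑ j, D j w x * D j w x with hFdef
  set L : EuclideanSpace ℝ (Fin n) → ℝ := fun x => ∑ i, D i (D i w) x with hLdef
  set Hpt : EuclideanSpace ℝ (Fin n) → ℝ := fun x =>
    ∑ p : Fin n × Fin n, D p.1 (D p.2 w) x * D p.1 (D p.2 w) x with hHdef
  set T : EuclideanSpace ℝ (Fin n) → ℝ := fun x =>
    ∑ p : Fin n × Fin n, D p.1 w x * D p.2 w x * D p.1 (D p.2 w) x with hTdef
  set M : ℝ := ⨆ x, |w x| with hMdef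
  set A : ℝ := ∫ x, F x * F x with hAdef
  set B : ℝ := ∫ x, L x * L x with hBdef
  -- basic facts
  have hF0 : ∀ x, 0 ≤ F x := fun x => Finset.sum_nonneg fun j _ => mul_self_nonneg _
  have hH0 : ∀ x, 0 ≤ Hpt x := fun x => Finset.sum_nonneg fun p _ => mul_self_nonneg _
  have hFBC : BC F := BC.sum _ fun j _ => (BC.of_schwartz (D j w)).mul (BC.of_schwartz (D j w))
  have hLBC : BC L := BC.sum _ fun i _ => BC.of_schwartz (D i (D i w))
  have hHBC : BC Hpt := BC.sum _ fun p _ =>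
    (BC.of_schwartz (D p.1 (D p.2 w))).mul (BC.of_schwartz (D p.1 (D p.2 w)))
  have hM : ∀ x, |w x| ≤ M := fun x => sup_abs_bound w x
  have hM0 : 0 ≤ M := le_trans (abs_nonneg _) (hM 0)
  have hA0 : 0 ≤ A := integral_nonneg fun x => mul_self_nonneg _
  have hB0 : 0 ≤ B := integral_nonneg fun x => mul_self_nonneg _
  -- integrability facts
  have intFF : Integrable (fun x => F x * F x) volume := by
    have e : (fun x => F x * F x) = fun x => ∑ i, D i w x * (D i w x * F x) := by
      funext x
      rw [hFdef]
      rw [Finset.sum_mul]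
      exact Finset.sum_congr rfl fun i _ => by ring
    rw [e]
    exact integrable_finset_sum _ fun i _ =>
      integrable_mul (D i w) ((BC.of_schwartz (D i w)).mul hFBC)
  have intLL : Integrable (fun x => L x * L x) volume := by
    have e : (fun x => L x * L x) = fun x => ∑ i, D i (D i w) x * L x := by
      funext x; rw [hLdef, Finset.sum_mul]
    rw [e]
    exact integrable_finset_sum _ fun i _ => integrable_mul (D i (D i w)) hLBC
  have intLF : Integrable (fun x => L x * F x) volume := by
    have e : (fun x => L x * F x) = fun x => ∑ i, D i (D i w) x * F x := by
      funext x; rw [hLdef, Finset.sum_mul]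
    rw [e]
    exact integrable_finset_sum _ fun i _ => integrable_mul (D i (D i w)) hFBC
  have intHpt : Integrable Hpt volume := by
    rw [hHdef]
    exact integrable_finset_sum _ fun p _ =>
      integrable_mul (D p.1 (D p.2 w)) (BC.of_schwartz (D p.1 (D p.2 w)))
  have intFsH : Integrable (fun x => F x * Real.sqrt (Hpt x)) volume := by
    have e : (fun x => F x * Real.sqrt (Hpt x))
        = fun x => ∑ i, D i w x * (D i w x * Real.sqrt (Hpt x)) := by
      funext x
      rw [hFdef, Finset.sum_mul]
      exact Finset.sum_congr rfl fun i _ => by ring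
    rw [e]
    exact integrable_finset_sum _ fun i _ =>
      integrable_mul (D i w) ((BC.of_schwartz (D i w)).mul hHBC.sqrt)
  have intWLF : Integrable (fun x => w x * (L x * F x)) volume :=
    integrable_mul w (hLBC.mul hFBC)
  have intWT : Integrable (fun x => w x * T x) volume := by
    refine integrable_mul w (BC.sum _ fun p _ => ?_)
    exact ((BC.of_schwartz (D p.1 w)).mul (BC.of_schwartz (D p.2 w))).mul
      (BC.of_schwartz (D p.1 (D p.2 w)))
  have intAbsLF : Integrable (fun x => |L x| * F x) volume := by
    have e : (fun x => |L x| * F x) = fun x => |L x * F x| := by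
      funext x; rw [abs_mul, abs_of_nonneg (hF0 x)]
    rw [e]; exact intLF.abs
  -- ∫ Hpt = B
  have hIntHptB : ∫ x, Hpt x = B := by
    rw [hHdef, hBdef]
    rw [integral_finset_sum _ fun p _ =>
      integrable_mul (D p.1 (D p.2 w)) (BC.of_schwartz (D p.1 (D p.2 w)))]
    exact hhess
  -- estimate E1
  have E1 : |∫ x, w x * (L x * F x)| ≤ M * (Real.sqrt B * Real.sqrt A) := by
    have h1 : |∫ x, w x * (L x * F x)| ≤ ∫ x, |w x * (L x * F x)| := by
      simpa only [Real.norm_eq_abs] using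
        norm_integral_le_integral_norm (μ := volume) (fun x => w x * (L x * F x))
    have h2 : ∫ x, |w x * (L x * F x)| ≤ ∫ x, M * (|L x| * F x) := by
      refine integral_mono intWLF.abs (intAbsLF.const_mul M) fun x => ?_
      rw [abs_mul, abs_mul, abs_of_nonneg (hF0 x), ← mul_assoc, mul_assoc]
      exact mul_le_mul_of_nonneg_right (hM x) (mul_nonneg (abs_nonneg _) (hF0 x))
    have h3 : ∫ x, M * (|L x| * F x) = M * ∫ x, |L x| * F x := integral_const_mul M _
    have h4 : ∫ x, |L x| * F x
        ≤ Real.sqrt (∫ x, |L x| ^ 2) * Real.sqrt (∫ x, F x ^ 2) := by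
      refine intCS (fun x => abs_nonneg _) hF0
        (hLBC.1.abs.aestronglyMeasurable) (hFBC.1.aestronglyMeasurable) ?_ ?_
      · have e : (fun x => |L x| ^ 2) = fun x => L x * L x := by
          funext x; rw [sq_abs, sq]
        rw [e]; exact intLL
      · have e : (fun x => F x ^ 2) = fun x => F x * F x := by funext x; rw [sq]
        rw [e]; exact intFF
    have e1 : ∫ x, |L x| ^ 2 = B := by
      rw [hBdef]; congr 1; funext x; rw [sq_abs, sq]
    have e2 : ∫ x, F x ^ 2 = A := by
      rw [hAdef]; congr 1; funext x; rw [sq]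
    rw [e1, e2] at h4
    calc |∫ x, w x * (L x * F x)| ≤ ∫ x, M * (|L x| * F x) := h1.trans h2
      _ = M * ∫ x, |L x| * F x := h3
      _ ≤ M * (Real.sqrt B * Real.sqrt A) := mul_le_mul_of_nonneg_left h4 hM0
  -- pointwise bound on T
  have hT : ∀ x, |T x| ≤ F x * Real.sqrt (Hpt x) := by
    intro x
    have h := Finset.sum_mul_sq_le_sq_mul_sq Finset.univ
      (fun p : Fin n × Fin n => D p.1 w x * D p.2 w x)
      (fun p : Fin n × Fin n => D p.1 (D p.2 w) x)
    have hFsq : (∑ p : Fin n × Fin n, (D p.1 w x * D p.2 w x) ^ 2) = F x * F x := by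
      rw [hFdef, ← Finset.univ_product_univ, Finset.sum_product, Finset.sum_mul_sum]
      exact Finset.sum_congr rfl fun i _ => Finset.sum_congr rfl fun j _ => by ring
    have hHsq : (∑ p : Fin n × Fin n, (D p.1 (D p.2 w) x) ^ 2) = Hpt x := by
      rw [hHdef]
      exact Finset.sum_congr rfl fun p _ => by rw [sq]
    rw [hFsq, hHsq] at h
    have h2 : |T x| = Real.sqrt (T x ^ 2) := (Real.sqrt_sq_eq_abs _).symm
    rw [h2]
    calc Real.sqrt (T x ^ 2) ≤ Real.sqrt (F x * F x * Hpt x) := Real.sqrt_le_sqrt h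
      _ = F x * Real.sqrt (Hpt x) := by
        rw [Real.sqrt_mul (mul_self_nonneg _), Real.sqrt_mul_self (hF0 x)]
  -- estimate E2
  have E2 : |∫ x, w x * T x| ≤ M * (Real.sqrt A * Real.sqrt B) := by
    have h1 : |∫ x, w x * T x| ≤ ∫ x, |w x * T x| := by
      simpa only [Real.norm_eq_abs] using
        norm_integral_le_integral_norm (μ := volume) (fun x => w x * T x)
    have h2 : ∫ x, |w x * T x| ≤ ∫ x, M * (F x * Real.sqrt (Hpt x)) := by
      refine integral_mono intWT.abs (intFsH.const_mul M) fun x => ?_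
      rw [abs_mul]
      exact mul_le_mul (hM x) (hT x) (abs_nonneg _) hM0
    have h3 : ∫ x, M * (F x * Real.sqrt (Hpt x))
        = M * ∫ x, F x * Real.sqrt (Hpt x) := integral_const_mul M _
    have h4 : ∫ x, F x * Real.sqrt (Hpt x)
        ≤ Real.sqrt (∫ x, F x ^ 2) * Real.sqrt (∫ x, Real.sqrt (Hpt x) ^ 2) := by
      refine intCS hF0 (fun x => Real.sqrt_nonneg _)
        (hFBC.1.aestronglyMeasurable) ((Real.continuous_sqrt.comp hHBC.1).aestronglyMeasurable)
        ?_ ?_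
      · have e : (fun x => F x ^ 2) = fun x => F x * F x := by funext x; rw [sq]
        rw [e]; exact intFF
      · have e : (fun x => Real.sqrt (Hpt x) ^ 2) = Hpt := by
          funext x; rw [Real.sq_sqrt (hH0 x)]
        rw [e]; exact intHpt
    have e1 : ∫ x, F x ^ 2 = A := by
      rw [hAdef]; congr 1; funext x; rw [sq]
    have e2 : ∫ x, Real.sqrt (Hpt x) ^ 2 = B := by
      rw [← hIntHptB]; congr 1; funext x; rw [Real.sq_sqrt (hH0 x)]
    rw [e1, e2] at h4
    calc |∫ x, w x * T x| ≤ ∫ x, M * (F x * Real.sqrt (Hpt x)) := h1.trans h2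
      _ = M * ∫ x, F x * Real.sqrt (Hpt x) := h3
      _ ≤ M * (Real.sqrt A * Real.sqrt B) := mul_le_mul_of_nonneg_left h4 hM0
  -- combine
  have hsb' : A = -((∫ x, w x * (L x * F x)) + 2 * ∫ x, w x * T x) := hsb
  have hkey : A ≤ 3 * M * (Real.sqrt A * Real.sqrt B) := by
    have h1 : A ≤ |(∫ x, w x * (L x * F x)) + 2 * ∫ x, w x * T x| := by
      rw [hsb']; exact neg_le_abs _
    have h2 : |(∫ x, w x * (L x * F x)) + 2 * ∫ x, w x * T x|
        ≤ |∫ x, w x * (L x * F x)| + 2 * |∫ x, w x * T x| := by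
      refine (abs_add_le _ _).trans ?_
      rw [abs_mul]
      norm_num
    calc A ≤ |∫ x, w x * (L x * F x)| + 2 * |∫ x, w x * T x| := h1.trans h2
      _ ≤ M * (Real.sqrt B * Real.sqrt A) + 2 * (M * (Real.sqrt A * Real.sqrt B)) := by
        have := E2
        have := E1
        linarith
      _ = 3 * M * (Real.sqrt A * Real.sqrt B) := by ring
  have final : Real.sqrt A ≤ 3 * M * Real.sqrt B := by
    have hmm : Real.sqrt A * Real.sqrt A ≤ (3 * M * Real.sqrt B) * Real.sqrt A := by
      rw [Real.mul_self_sqrt hA0]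
      calc A ≤ 3 * M * (Real.sqrt A * Real.sqrt B) := hkey
        _ = (3 * M * Real.sqrt B) * Real.sqrt A := by ring
    rcases (Real.sqrt_nonneg A).eq_or_lt with h0 | hpos
    · rw [← h0]; positivity
    · exact le_of_mul_le_mul_right hmm hpos
  exact final

end GNaux

/-- The squared Euclidean norm of the gradient: `|∇w(x)|² = Σᵢ (∂w/∂xᵢ)²`. -/
noncomputable def gradSq {n : ℕ} (w : EuclideanSpace ℝ (Fin n) → ℝ)
    (x : EuclideanSpace ℝ (Fin n)) : ℝ :=
  ∑ i, (fderiv ℝ w x (EuclideanSpace.single i 1)) ^ 2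

/-- The Laplacian `Δw = Σᵢ ∂²w/∂xᵢ²`. -/
noncomputable def lap {n : ℕ} (w : EuclideanSpace ℝ (Fin n) → ℝ)
    (x : EuclideanSpace ℝ (Fin n)) : ℝ :=
  ∑ i, fderiv ℝ (fun y => fderiv ℝ w y (EuclideanSpace.single i 1)) x
    (EuclideanSpace.single i 1)

/-- Gagliardo–Nirenberg-type inequality `‖∇w‖_{L⁴}² ≤ C ‖w‖_{L∞} ‖Δw‖_{L²}`. -/
theorem stmt10 (n : ℕ) (hn : 1 ≤ n) :
    ∃ C : ℝ, 0 < C ∧ ∀ w : SchwartzMap (EuclideanSpace ℝ (Fin n)) ℝ,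
      Real.sqrt (∫ x, (gradSq (⇑w) x) ^ 2) ≤
        C * (⨆ x, |w x|) * Real.sqrt (∫ x, (lap (⇑w) x) ^ 2) := by
  refine ⟨3, by norm_num, fun w => ?_⟩
  have hgrad : ∀ x, gradSq (⇑w) x = ∑ j, GNaux.D j w x * GNaux.D j w x := by
    intro x
    unfold gradSq
    exact Finset.sum_congr rfl fun j _ => by
      rw [GNaux.D_apply, sq]; rfl
  have hlap : ∀ x, lap (⇑w) x = ∑ i, GNaux.D i (GNaux.D i w) x := by
    intro x
    unfold lap
    refine Finset.sum_congr rfl fun i _ => ?_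
    rw [GNaux.D_apply]
    have hco : ⇑(GNaux.D i w) = fun y => fderiv ℝ (⇑w) y (EuclideanSpace.single i 1) :=
      funext fun y => GNaux.D_apply i w y
    rw [hco]
    rfl
  have e1 : ∫ x, (gradSq (⇑w) x) ^ 2
      = ∫ x, (∑ j, GNaux.D j w x * GNaux.D j w x) * (∑ j, GNaux.D j w x * GNaux.D j w x) := by
    congr 1; funext x; rw [hgrad x, sq]
  have e2 : ∫ x, (lap (⇑w) x) ^ 2
      = ∫ x, (∑ i, GNaux.D i (GNaux.D i w) x) * (∑ i, GNaux.D i (GNaux.D i w) x) := by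
    congr 1; funext x; rw [hlap x, sq]
  rw [e1, e2]
  exact GNaux.mainIneq w
end

section
/- Let θ ∈ (−π/2, π/2), set ū'(t) = (−sin t, cos t) ∈ ℝ², J = [[0, −1], [1, 0]], and R = [[cos θ, −sin θ], [sin θ, cos θ]]. For every real 2×2 matrix D one has ( ∫₀^{2π} ū'(t)ᵀ Rᵀ D ū'(t) dt ) / ( ∫₀^{2π} ū'(t)ᵀ Rᵀ ū'(t) dt ) = Tr(Rᵀ D) / Tr(Rᵀ) = (1/2) ( Tr(D) − tan(θ) · Tr(J D) ), and in particular the denominator ∫₀^{2π} ū'(t)ᵀ Rᵀ ū'(t) dt = 2π cos θ is nonzero. -/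
open Real intervalIntegral

lemma stmt15_key (M : Matrix (Fin 2) (Fin 2) ℝ) :
    (∫ t in (0:ℝ)..(2*Real.pi),
      dotProduct (![-(Real.sin t), Real.cos t] : Fin 2 → ℝ)
        (M.mulVec ![-(Real.sin t), Real.cos t])) = Real.pi * M.trace := by
  have h1 : (∫ t in (0:ℝ)..(2*Real.pi), Real.sin t ^ 2) = Real.pi := by
    rw [integral_sin_sq]; simp [Real.sin_two_pi, Real.cos_two_pi]
  have h2 : (∫ t in (0:ℝ)..(2*Real.pi), Real.cos t ^ 2) = Real.pi := by
    rw [integral_cos_sq]; simp [Real.sin_two_pi, Real.cos_two_pi]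
  have h3 : (∫ t in (0:ℝ)..(2*Real.pi), Real.sin t * Real.cos t) = 0 := by
    rw [integral_sin_mul_cos₁]; simp [Real.sin_two_pi]
  have heq : (fun t => dotProduct (![-(Real.sin t), Real.cos t] : Fin 2 → ℝ)
        (M.mulVec ![-(Real.sin t), Real.cos t]))
      = fun t => M 0 0 * Real.sin t ^ 2 + (-(M 0 1) - M 1 0) * (Real.sin t * Real.cos t)
          + M 1 1 * Real.cos t ^ 2 := by
    funext t
    simp [dotProduct, Matrix.mulVec, Fin.sum_univ_two]
    ring
  have i1 : IntervalIntegrable (fun t => Real.sin t ^ 2) MeasureTheory.volume 0 (2*Real.pi) := by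
    apply Continuous.intervalIntegrable; continuity
  have i2 : IntervalIntegrable (fun t => Real.sin t * Real.cos t) MeasureTheory.volume 0 (2*Real.pi) := by
    apply Continuous.intervalIntegrable; continuity
  have i3 : IntervalIntegrable (fun t => Real.cos t ^ 2) MeasureTheory.volume 0 (2*Real.pi) := by
    apply Continuous.intervalIntegrable; continuity
  rw [heq]
  rw [intervalIntegral.integral_add (((i1.const_mul _).add (i2.const_mul _))) (i3.const_mul _),
      intervalIntegral.integral_add (i1.const_mul _) (i2.const_mul _),
      intervalIntegral.integral_const_mul, intervalIntegral.integral_const_mul,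
      intervalIntegral.integral_const_mul, h1, h2, h3, Matrix.trace_fin_two]
  ring

/-- Computation of the effective diffusion coefficient
`d₀ = (∫₀^{2π} ū'ᵀ Rᵀ D ū' dt)/(∫₀^{2π} ū'ᵀ Rᵀ ū' dt) = Tr(RᵀD)/Tr(Rᵀ)
   = ½(Tr D − tan θ · Tr(JD))`, with nonzero denominator `2π cos θ`. -/
theorem stmt15 (θ : ℝ)
    (hθ : -(Real.pi / 2) < θ ∧ θ < Real.pi / 2)
    (J R : Matrix (Fin 2) (Fin 2) ℝ)
    (hJ : J = !![0, -1; 1, 0])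
    (hR : R = !![Real.cos θ, -(Real.sin θ); Real.sin θ, Real.cos θ])
    (v : ℝ → Fin 2 → ℝ)
    (hv : v = fun t => ![-(Real.sin t), Real.cos t])
    (D : Matrix (Fin 2) (Fin 2) ℝ) :
    (∫ t in (0 : ℝ)..(2 * Real.pi),
        dotProduct (v t) ((R.transpose * D).mulVec (v t))) /
      (∫ t in (0 : ℝ)..(2 * Real.pi),
        dotProduct (v t) (R.transpose.mulVec (v t)))
      = (R.transpose * D).trace / R.transpose.trace ∧
    (R.transpose * D).trace / R.transpose.trace
      = (1 / 2) * (D.trace - Real.tan θ * (J * D).trace) ∧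
    (∫ t in (0 : ℝ)..(2 * Real.pi),
        dotProduct (v t) (R.transpose.mulVec (v t)))
      = 2 * Real.pi * Real.cos θ ∧
    2 * Real.pi * Real.cos θ ≠ 0 := by
  subst hv
  have hc : Real.cos θ > 0 := Real.cos_pos_of_mem_Ioo ⟨hθ.1, hθ.2⟩
  have hInt1 := stmt15_key (R.transpose * D)
  have hInt2 := stmt15_key R.transpose
  have htrR : R.transpose.trace = 2 * Real.cos θ := by
    subst hR; simp [Matrix.trace_fin_two, Matrix.transpose]; ring
  refine ⟨?_, ?_, ?_, ?_⟩
  · rw [hInt1, hInt2, mul_div_mul_left _ _ Real.pi_ne_zero]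
  · have htrRD : (R.transpose * D).trace
        = Real.cos θ * D.trace + Real.sin θ * (D 1 0 - D 0 1) := by
      subst hR
      simp [Matrix.trace_fin_two, Matrix.mul_apply, Fin.sum_univ_two, Matrix.transpose]
      ring
    have htrJD : (J * D).trace = D 0 1 - D 1 0 := by
      subst hJ
      simp [Matrix.trace_fin_two, Matrix.mul_apply, Matrix.vecMul, dotProduct, Fin.sum_univ_two]; ring
    rw [htrRD, htrR, htrJD, Real.tan_eq_sin_div_cos]
    field_simp
    ring
  · rw [hInt2, htrR]; ring
  · positivity
end
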